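/- Pushforward commutes with the kernel filtration of a nilpotent Higgs field: let π: X_s → X_0 be a proper morphism of curves which is an isomorphism over a dense open U^o ⊆ X_0, and let (E, φ) be a Higgs bundle on X_s such that for every i, any local section σ of E ⊗ ω^{⊗i} vanishing on π^{-1}(U^o) vanishes identically (e.g. because E ⊗ ω^{⊗i} restricted to the exceptional chain of P^1's is globally generated with sections determined by their values at two points). Set E^i := ker(φ^i) and F^i := ker((π_*φ)^i) ⊆ π_*E. Then π_*(E^i) = F^i for all i. -/

import Mathlib

theorem LinearMap.ker_eq_ker_of_injective_comp_eq {R A B C P : Type*} [Semiring R]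
    [AddCommMonoid A] [Module R A] [AddCommMonoid B] [Module R B]
    [AddCommMonoid C] [Module R C] [AddCommMonoid P] [Module R P]
    {f : A →ₗ[R] B} {g : A →ₗ[R] C} {c : B →ₗ[R] P} {d : C →ₗ[R] P}
    (hc : Function.Injective c) (hd : Function.Injective d) (h : c ∘ₗ f = d ∘ₗ g) :
    LinearMap.ker f = LinearMap.ker g := by
  ext x
  rw [LinearMap.mem_ker, LinearMap.mem_ker, ← hc.eq_iff, map_zero, ← LinearMap.comp_apply, h,
    LinearMap.comp_apply, hd.eq_iff' (map_zero d)]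

theorem stmt12_general {R : Type*} [CommRing R]
    (M N P : ℕ → Type*)
    [∀ i, AddCommGroup (M i)] [∀ i, Module R (M i)]
    [∀ i, AddCommGroup (N i)] [∀ i, Module R (N i)]
    [∀ i, AddCommGroup (P i)] [∀ i, Module R (P i)]
    (c : ∀ i, M i →ₗ[R] P i) (d : ∀ i, N i →ₗ[R] P i)
    (hc : ∀ i, Function.Injective (c i)) (hd : ∀ i, Function.Injective (d i))
    (e : M 0 ≃ₗ[R] N 0)
    (Φ : ∀ i, M 0 →ₗ[R] M i) (Ψ : ∀ i, N 0 →ₗ[R] N i)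
    (hcomp : ∀ i, (c i) ∘ₗ Φ i = ((d i) ∘ₗ Ψ i) ∘ₗ (e : M 0 →ₗ[R] N 0)) :
    ∀ i, LinearMap.ker (Φ i) =
      Submodule.comap (e : M 0 →ₗ[R] N 0) (LinearMap.ker (Ψ i)) := by
  intro i
  rw [← LinearMap.ker_comp]
  exact LinearMap.ker_eq_ker_of_injective_comp_eq (hc i) (hd i) (hcomp i)

/-- Pushforward commutes with the kernel filtration of a nilpotent Higgs
field.  Abstract sections-level formulation: `M i` are the sections of `E ⊗ ω_{X_s}^{⊗i}`
over `π^{-1}(U)`, `N i` the sections of `π_*E ⊗ ω_{X_0}^{⊗i}` over `U`, and `P i` the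
sections over the dense open `U^o` where `π` is an isomorphism.  The restriction maps
`c i : M i → P i` are injective (the key vanishing hypothesis: a section vanishing on
`π^{-1}(U^o)` vanishes identically) and `d i : N i → P i` are injective (torsion-freeness);
`e : M 0 ≅ N 0` is the identification `E(π^{-1}U) = (π_*E)(U)`; `Φ i`, `Ψ i` are the `i`-th
iterates `φ^i`, `(π_*φ)^i`, and they agree after restriction to `U^o`.  Then
`π_*(ker φ^i) = ker (π_*φ)^i`, i.e. `ker (Φ i) = e^{-1}(ker (Ψ i))` for all `i`. -/
theorem stmt12 {R : Type*} [CommRing R]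
    (M N P : ℕ → Type*)
    [∀ i, AddCommGroup (M i)] [∀ i, Module R (M i)]
    [∀ i, AddCommGroup (N i)] [∀ i, Module R (N i)]
    [∀ i, AddCommGroup (P i)] [∀ i, Module R (P i)]
    (φ : ∀ i, M i →ₗ[R] M (i + 1)) (ψ : ∀ i, N i →ₗ[R] N (i + 1))
    (c : ∀ i, M i →ₗ[R] P i) (d : ∀ i, N i →ₗ[R] P i)
    (hc : ∀ i, Function.Injective (c i)) (hd : ∀ i, Function.Injective (d i))
    (e : M 0 ≃ₗ[R] N 0)
    (Φ : ∀ i, M 0 →ₗ[R] M i) (Ψ : ∀ i, N 0 →ₗ[R] N i)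
    (hΦ0 : Φ 0 = LinearMap.id) (hΦs : ∀ i, Φ (i + 1) = (φ i) ∘ₗ Φ i)
    (hΨ0 : Ψ 0 = LinearMap.id) (hΨs : ∀ i, Ψ (i + 1) = (ψ i) ∘ₗ Ψ i)
    (hcomp : ∀ i, (c i) ∘ₗ Φ i = ((d i) ∘ₗ Ψ i) ∘ₗ (e : M 0 →ₗ[R] N 0)) :
    ∀ i, LinearMap.ker (Φ i) =
      Submodule.comap (e : M 0 →ₗ[R] N 0) (LinearMap.ker (Ψ i)) :=
  stmt12_general M N P c d hc hd e Φ Ψ hcomp
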